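/- (Energy conservation of the linearized EQ system.) Let N be a positive natural number, and work in ℝ^N with the standard inner product ⟨·,·⟩ and componentwise product ⊙. Let S : ℝ^N → ℝ^N be a linear map with ⟨S v, v⟩ = 0 for all v, and let a : ℝ → ℝ^N be any function (the interpolant of previous solutions). Let u, q : ℝ → ℝ^N be differentiable and satisfy u'(t) = S( u(t) + (1/6) q(t) + (1/3) a(t) ⊙ u(t) ) and q'(t) = 2 a(t) ⊙ u'(t) for all t. Then E(t) = ½ ⟨u(t), u(t)⟩ + (1/6) ⟨u(t), q(t)⟩ is constant in t. -/

import Mathlib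

/-!
Along a solution, `dE/dt = ⟪u', u⟫ + (1/6)(⟪u', q⟫ + ⟪u, q'⟫)`. Since `q' = 2 a ⊙ u'` and
pointwise multiplication is symmetric, `⟪u, q'⟫ = 2⟪u', a ⊙ u⟫`, so `dE/dt = ⟪u', w⟫` with
`w = u + q/6 + (1/3) a ⊙ u`. But `u' = S w`, and `⟪S w, w⟫ = 0` by skew-adjointness.
-/

open scoped RealInnerProductSpace

/-- Componentwise (pointwise) product on `EuclideanSpace ℝ (Fin N)`. -/
def cwMul {N : ℕ} (v w : EuclideanSpace ℝ (Fin N)) : EuclideanSpace ℝ (Fin N) :=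
  WithLp.toLp 2 (fun i => v i * w i)

theorem inner_cwMul_right {N : ℕ} (x v w : EuclideanSpace ℝ (Fin N)) :
    ⟪v, cwMul x w⟫ = ⟪cwMul x v, w⟫ := by
  simp only [cwMul, PiLp.inner_apply, RCLike.inner_apply, conj_trivial]
  exact Finset.sum_congr rfl fun i _ => by ring

section EnergyConservation

variable {F : Type*} [NormedAddCommGroup F] [InnerProductSpace ℝ F]

theorem hasDerivAt_quadraticEnergy {u q : ℝ → F} {u' q' : F} {t : ℝ}
    (hu : HasDerivAt u u' t) (hq : HasDerivAt q q' t) :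
    HasDerivAt (fun t => (1/2 : ℝ) * ⟪u t, u t⟫ + (1/6 : ℝ) * ⟪u t, q t⟫)
      (⟪u', u t⟫ + (1/6 : ℝ) * (⟪u', q t⟫ + ⟪u t, q'⟫)) t := by
  refine (((hu.inner ℝ hu).const_mul (1/2 : ℝ)).add
    ((hu.inner ℝ hq).const_mul (1/6 : ℝ))).congr_deriv ?_
  rw [real_inner_comm (u t) u']
  ring

theorem quadraticEnergy_rate_eq_zero {S A : F → F} (hS : ∀ v, ⟪S v, v⟫ = 0)
    (hA : ∀ v w, ⟪v, A w⟫ = ⟪A v, w⟫) {u q u' q' : F}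
    (hu' : u' = S (u + (1/6 : ℝ) • q + (1/3 : ℝ) • A u)) (hq' : q' = (2 : ℝ) • A u') :
    ⟪u', u⟫ + (1/6 : ℝ) * (⟪u', q⟫ + ⟪u, q'⟫) = 0 := by
  calc ⟪u', u⟫ + (1/6 : ℝ) * (⟪u', q⟫ + ⟪u, q'⟫)
      = ⟪u', u + (1/6 : ℝ) • q + (1/3 : ℝ) • A u⟫ := by
        rw [hq', inner_add_right, inner_add_right, real_inner_smul_right,
          real_inner_smul_right, real_inner_smul_right, hA, real_inner_comm (A u)]
        ring
    _ = 0 := by rw [hu']; exact hS _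

theorem quadraticEnergy_eq_of_skew {S : F → F} {A : ℝ → F → F}
    (hS : ∀ v, ⟪S v, v⟫ = 0) (hA : ∀ t v w, ⟪v, A t w⟫ = ⟪A t v, w⟫) {u q : ℝ → F}
    (hu : Differentiable ℝ u) (hq : Differentiable ℝ q)
    (hueq : ∀ t, deriv u t = S (u t + (1/6 : ℝ) • q t + (1/3 : ℝ) • A t (u t)))
    (hqeq : ∀ t, deriv q t = (2 : ℝ) • A t (deriv u t)) (t₁ t₂ : ℝ) :
    (1/2 : ℝ) * ⟪u t₁, u t₁⟫ + (1/6 : ℝ) * ⟪u t₁, q t₁⟫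
      = (1/2 : ℝ) * ⟪u t₂, u t₂⟫ + (1/6 : ℝ) * ⟪u t₂, q t₂⟫ := by
  have hE : ∀ t, HasDerivAt (fun t => (1/2 : ℝ) * ⟪u t, u t⟫ + (1/6 : ℝ) * ⟪u t, q t⟫) 0 t :=
    fun t => quadraticEnergy_rate_eq_zero hS (hA t) (hueq t) (hqeq t) ▸
      hasDerivAt_quadraticEnergy (hu t).hasDerivAt (hq t).hasDerivAt
  exact is_const_of_deriv_eq_zero (fun t => (hE t).differentiableAt) (fun t => (hE t).deriv) t₁ t₂

end EnergyConservation

theorem linearized_eq_system_energy_conservation_general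
    (N : ℕ)
    (S : EuclideanSpace ℝ (Fin N) →ₗ[ℝ] EuclideanSpace ℝ (Fin N))
    (hS : ∀ v : EuclideanSpace ℝ (Fin N), ⟪S v, v⟫ = 0)
    (a : ℝ → EuclideanSpace ℝ (Fin N))
    (u q : ℝ → EuclideanSpace ℝ (Fin N))
    (hu : Differentiable ℝ u) (hq : Differentiable ℝ q)
    (hueq : ∀ t, deriv u t
      = S (u t + (1/6 : ℝ) • q t + (1/3 : ℝ) • cwMul (a t) (u t)))
    (hqeq : ∀ t, deriv q t = (2 : ℝ) • cwMul (a t) (deriv u t)) :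
    ∀ t₁ t₂ : ℝ,
      (1/2 : ℝ) * ⟪u t₁, u t₁⟫ + (1/6 : ℝ) * ⟪u t₁, q t₁⟫
        = (1/2 : ℝ) * ⟪u t₂, u t₂⟫ + (1/6 : ℝ) * ⟪u t₂, q t₂⟫ :=
  quadraticEnergy_eq_of_skew hS (fun t => inner_cwMul_right (a t)) hu hq hueq hqeq

/-- the linearized EQ system (with interpolant a(t)) conserves the
quadratic energy E(t) = ½⟨u,u⟩ + (1/6)⟨u,q⟩. -/
theorem linearized_eq_system_energy_conservation
    (N : ℕ) (hN : 0 < N)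
    (S : EuclideanSpace ℝ (Fin N) →ₗ[ℝ] EuclideanSpace ℝ (Fin N))
    (hS : ∀ v : EuclideanSpace ℝ (Fin N), ⟪S v, v⟫ = 0)
    (a : ℝ → EuclideanSpace ℝ (Fin N))
    (u q : ℝ → EuclideanSpace ℝ (Fin N))
    (hu : Differentiable ℝ u) (hq : Differentiable ℝ q)
    (hueq : ∀ t, deriv u t
      = S (u t + (1/6 : ℝ) • q t + (1/3 : ℝ) • cwMul (a t) (u t)))
    (hqeq : ∀ t, deriv q t = (2 : ℝ) • cwMul (a t) (deriv u t)) :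
    ∀ t₁ t₂ : ℝ,
      (1/2 : ℝ) * ⟪u t₁, u t₁⟫ + (1/6 : ℝ) * ⟪u t₁, q t₁⟫
        = (1/2 : ℝ) * ⟪u t₂, u t₂⟫ + (1/6 : ℝ) * ⟪u t₂, q t₂⟫ :=
  linearized_eq_system_energy_conservation_general N S hS a u q hu hq hueq hqeq
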